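/- arXiv:1903.08357 — 10 statements merged into one kernel-verified Lean document; each statement's English description precedes it below -/
import Mathlib

section
/- Let I, J be finite types, let A, B be expectations on I × J, and let E1 : Matrix I I ℂ → Matrix I I ℂ and E2 : Matrix J J ℂ → Matrix J J ℂ be linear maps sending positive semidefinite matrices to positive semidefinite matrices. Then the judgment qRHL(A, E1, E2, B) holds if and only if for all unit vectors ψ1 : I → ℂ and ψ2 : J → ℂ there exists a separable positive semidefinite ρ' : Matrix (I × J) (I × J) ℂ such that tr₂(ρ') = E1(vecMulVec ψ1 (star ψ1)), tr₁(ρ') = E2(vecMulVec ψ2 (star ψ2)), and (star (ψ1 ⊗ ψ2) ⬝ᵥ (A.mulVec (ψ1 ⊗ ψ2))).re ≤ (Matrix.trace (B * ρ')).re, where ψ1 ⊗ ψ2 : I × J → ℂ is the vector (i,j) ↦ ψ1 i * ψ2 j. -/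
open Matrix Kronecker ComplexOrder

noncomputable section

/-- Partial trace over the second factor: `tr₂(ρ) i i' = ∑ j, ρ (i,j) (i',j)`. -/
def trB {I J : Type*} [Fintype J] (ρ : Matrix (I × J) (I × J) ℂ) : Matrix I I ℂ :=
  Matrix.of fun i i' => ∑ j, ρ (i, j) (i', j)

/-- Partial trace over the first factor: `tr₁(ρ) j j' = ∑ i, ρ (i,j) (i,j')`. -/
def trA {I J : Type*} [Fintype I] (ρ : Matrix (I × J) (I × J) ℂ) : Matrix J J ℂ :=
  Matrix.of fun j j' => ∑ i, ρ (i, j) (i, j')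

/-- `ρ` is separable iff it is a finite sum of Kronecker products of
positive semidefinite matrices. -/
def Separable {I J : Type*} [Fintype I] [Fintype J]
    (ρ : Matrix (I × J) (I × J) ℂ) : Prop :=
  ∃ (n : ℕ) (σ : Fin n → Matrix I I ℂ) (τ : Fin n → Matrix J J ℂ),
    (∀ k, (σ k).PosSemidef) ∧ (∀ k, (τ k).PosSemidef) ∧ ρ = ∑ k, σ k ⊗ₖ τ k

/-- The expectation-qRHL judgment `qRHL(A, E1, E2, B)`. -/
def qRHL {I J : Type*} [Fintype I] [Fintype J]
    (A : Matrix (I × J) (I × J) ℂ)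
    (E1 : Matrix I I ℂ → Matrix I I ℂ) (E2 : Matrix J J ℂ → Matrix J J ℂ)
    (B : Matrix (I × J) (I × J) ℂ) : Prop :=
  ∀ ρ : Matrix (I × J) (I × J) ℂ, ρ.PosSemidef → Separable ρ →
    ∃ ρ' : Matrix (I × J) (I × J) ℂ, ρ'.PosSemidef ∧ Separable ρ' ∧
      trB ρ' = E1 (trB ρ) ∧ trA ρ' = E2 (trA ρ) ∧
      (Matrix.trace (A * ρ)).re ≤ (Matrix.trace (B * ρ')).re

/-!
The qRHL obligation for a fixed initial state `ρ` (`qRHLAt`) is preserved by sums and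
nonnegative scalings of `ρ`: add or scale the witnesses `ρ'`, using linearity of `E1`, `E2`, of
the partial traces and of the trace. Decomposing each positive semidefinite factor into rank-one
terms, every separable state is a sum of products `x x* ⊗ y y*`, each a nonnegative multiple of
`ψ1 ψ1* ⊗ ψ2 ψ2*` with unit vectors `ψ1`, `ψ2`; for such a product the obligation is literally
the pure-state condition.
-/

namespace Matrix

theorem sum_kronecker_sum {α ι κ l m n p : Type*} [NonUnitalNonAssocSemiring α]
    (s : Finset ι) (t : Finset κ) (f : ι → Matrix l m α) (g : κ → Matrix n p α) :
    (∑ i ∈ s, f i) ⊗ₖ (∑ j ∈ t, g j) = ∑ i ∈ s, ∑ j ∈ t, f i ⊗ₖ g j := by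
  ext ⟨a, b⟩ ⟨a', b'⟩
  simp only [kroneckerMap_apply, sum_apply, Finset.sum_mul_sum]

theorem vecMulVec_star_kronecker_vecMulVec_star {α m n : Type*} [CommSemiring α] [StarRing α]
    (x : m → α) (y : n → α) :
    vecMulVec x (star x) ⊗ₖ vecMulVec y (star y) =
      vecMulVec (fun p : m × n => x p.1 * y p.2) (star fun p : m × n => x p.1 * y p.2) := by
  ext ⟨i, j⟩ ⟨i', j'⟩
  simp only [kroneckerMap_apply, vecMulVec_apply, Pi.star_apply, star_mul']
  ring

theorem trace_mul_vecMulVec_star {α n : Type*} [Fintype n] [CommSemiring α] [StarRing α]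
    (M : Matrix n n α) (x : n → α) :
    trace (M * vecMulVec x (star x)) = star x ⬝ᵥ M *ᵥ x := by
  rw [mul_vecMulVec, trace_vecMulVec, dotProduct_comm]

theorem vecMulVec_real_smul_star {n : Type*} (r : ℝ) (v : n → ℂ) :
    vecMulVec (r • v) (star (r • v)) = (r ^ 2) • vecMulVec v (star v) := by
  rw [star_smul, star_trivial, smul_vecMulVec, vecMulVec_smul, smul_smul, sq]

theorem exists_real_smul_of_dotProduct_star_self_eq_one {n : Type*} [Fintype n] {x : n → ℂ}
    (hx : x ≠ 0) : ∃ (r : ℝ) (u : n → ℂ), star u ⬝ᵥ u = 1 ∧ x = r • u := by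
  obtain ⟨hre, him⟩ := Complex.pos_iff.mp (dotProduct_star_self_pos_iff.mpr hx)
  set c := (star x ⬝ᵥ x).re
  have hx_dot : star x ⬝ᵥ x = (c : ℂ) := Complex.ext rfl (by simpa using him.symm)
  have hr : Real.sqrt c ≠ 0 := (Real.sqrt_pos.mpr hre).ne'
  refine ⟨Real.sqrt c, (Real.sqrt c)⁻¹ • x, ?_, by rw [smul_smul, mul_inv_cancel₀ hr, one_smul]⟩
  rw [star_smul, star_trivial, smul_dotProduct, dotProduct_smul, smul_smul, hx_dot,
    Complex.real_smul, ← Complex.ofReal_mul, ← mul_inv, Real.mul_self_sqrt hre.le,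
    inv_mul_cancel₀ hre.ne', Complex.ofReal_one]

end Matrix

theorem trB_zero {I J : Type*} [Fintype J] : trB (0 : Matrix (I × J) (I × J) ℂ) = 0 := by
  ext; simp [trB]

theorem trA_zero {I J : Type*} [Fintype I] : trA (0 : Matrix (I × J) (I × J) ℂ) = 0 := by
  ext; simp [trA]

theorem trB_add {I J : Type*} [Fintype J] (ρ σ : Matrix (I × J) (I × J) ℂ) :
    trB (ρ + σ) = trB ρ + trB σ := by
  ext; simp [trB, Finset.sum_add_distrib]

theorem trA_add {I J : Type*} [Fintype I] (ρ σ : Matrix (I × J) (I × J) ℂ) :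
    trA (ρ + σ) = trA ρ + trA σ := by
  ext; simp [trA, Finset.sum_add_distrib]

theorem trB_smul {I J R : Type*} [Fintype J] [DistribSMul R ℂ] (c : R)
    (ρ : Matrix (I × J) (I × J) ℂ) :
    trB (c • ρ) = c • trB ρ := by
  ext; simp [trB, Finset.smul_sum]

theorem trA_smul {I J R : Type*} [Fintype I] [DistribSMul R ℂ] (c : R)
    (ρ : Matrix (I × J) (I × J) ℂ) :
    trA (c • ρ) = c • trA ρ := by
  ext; simp [trA, Finset.smul_sum]

theorem trB_kronecker {I J : Type*} [Fintype J] (σ : Matrix I I ℂ) (τ : Matrix J J ℂ) :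
    trB (σ ⊗ₖ τ) = τ.trace • σ := by
  ext
  simp [trB, trace, ← Finset.mul_sum, mul_comm]

theorem trA_kronecker {I J : Type*} [Fintype I] (σ : Matrix I I ℂ) (τ : Matrix J J ℂ) :
    trA (σ ⊗ₖ τ) = σ.trace • τ := by
  ext
  simp [trA, trace, ← Finset.sum_mul]

namespace Separable

variable {I J : Type*} [Fintype I] [Fintype J]

theorem zero : Separable (0 : Matrix (I × J) (I × J) ℂ) :=
  ⟨0, Fin.elim0, Fin.elim0, fun k => k.elim0, fun k => k.elim0, by simp⟩

theorem add {ρ₁ ρ₂ : Matrix (I × J) (I × J) ℂ} (h₁ : Separable ρ₁) (h₂ : Separable ρ₂) :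
    Separable (ρ₁ + ρ₂) := by
  obtain ⟨n₁, σ₁, τ₁, hσ₁, hτ₁, rfl⟩ := h₁
  obtain ⟨n₂, σ₂, τ₂, hσ₂, hτ₂, rfl⟩ := h₂
  refine ⟨n₁ + n₂, Fin.append σ₁ σ₂, Fin.append τ₁ τ₂, Fin.addCases ?_ ?_, Fin.addCases ?_ ?_,
    by simp [Fin.sum_univ_add]⟩ <;> simpa

theorem kronecker {σ : Matrix I I ℂ} {τ : Matrix J J ℂ} (hσ : σ.PosSemidef) (hτ : τ.PosSemidef) :
    Separable (σ ⊗ₖ τ) :=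
  ⟨1, fun _ => σ, fun _ => τ, fun _ => hσ, fun _ => hτ, by simp⟩

theorem smul {c : ℝ} (hc : 0 ≤ c) {ρ : Matrix (I × J) (I × J) ℂ} (h : Separable ρ) :
    Separable (c • ρ) := by
  obtain ⟨n, σ, τ, hσ, hτ, rfl⟩ := h
  refine ⟨n, fun k => c • σ k, τ, fun k => (hσ k).smul hc, hτ, ?_⟩
  simp only [Finset.smul_sum, smul_kronecker]

end Separable

def qRHLAt {I J : Type*} [Fintype I] [Fintype J] (A : Matrix (I × J) (I × J) ℂ)
    (E1 : Matrix I I ℂ → Matrix I I ℂ) (E2 : Matrix J J ℂ → Matrix J J ℂ)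
    (B ρ : Matrix (I × J) (I × J) ℂ) : Prop :=
  ∃ ρ' : Matrix (I × J) (I × J) ℂ, ρ'.PosSemidef ∧ Separable ρ' ∧
    trB ρ' = E1 (trB ρ) ∧ trA ρ' = E2 (trA ρ) ∧
    (Matrix.trace (A * ρ)).re ≤ (Matrix.trace (B * ρ')).re

namespace qRHLAt

variable {I J : Type*} [Fintype I] [Fintype J] {A B : Matrix (I × J) (I × J) ℂ}
  {E1 : Matrix I I ℂ →ₗ[ℂ] Matrix I I ℂ} {E2 : Matrix J J ℂ →ₗ[ℂ] Matrix J J ℂ}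

theorem zero : qRHLAt A E1 E2 B 0 :=
  ⟨0, .zero, .zero, by simp [trB_zero], by simp [trA_zero], by simp⟩

theorem add {ρ₁ ρ₂ : Matrix (I × J) (I × J) ℂ} (h₁ : qRHLAt A E1 E2 B ρ₁)
    (h₂ : qRHLAt A E1 E2 B ρ₂) : qRHLAt A E1 E2 B (ρ₁ + ρ₂) := by
  obtain ⟨ρ₁', hpsd₁, hsep₁, hB₁, hA₁, hle₁⟩ := h₁
  obtain ⟨ρ₂', hpsd₂, hsep₂, hB₂, hA₂, hle₂⟩ := h₂
  refine ⟨ρ₁' + ρ₂', hpsd₁.add hpsd₂, hsep₁.add hsep₂, ?_, ?_, ?_⟩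
  · rw [trB_add, trB_add, map_add, hB₁, hB₂]
  · rw [trA_add, trA_add, map_add, hA₁, hA₂]
  · simpa only [mul_add, trace_add, Complex.add_re] using add_le_add hle₁ hle₂

theorem smul {c : ℝ} (hc : 0 ≤ c) {ρ : Matrix (I × J) (I × J) ℂ} (h : qRHLAt A E1 E2 B ρ) :
    qRHLAt A E1 E2 B (c • ρ) := by
  obtain ⟨ρ', hpsd, hsep, hB, hA, hle⟩ := h
  refine ⟨c • ρ', hpsd.smul hc, hsep.smul hc, ?_, ?_, ?_⟩
  · rw [trB_smul, trB_smul, LinearMap.map_smul_of_tower, hB]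
  · rw [trA_smul, trA_smul, LinearMap.map_smul_of_tower, hA]
  · simpa only [mul_smul_comm, trace_smul, Complex.smul_re, smul_eq_mul]
      using mul_le_mul_of_nonneg_left hle hc

theorem sum {ι : Type*} (s : Finset ι) {ρ : ι → Matrix (I × J) (I × J) ℂ}
    (h : ∀ i ∈ s, qRHLAt A E1 E2 B (ρ i)) : qRHLAt A E1 E2 B (∑ i ∈ s, ρ i) :=
  Finset.sum_induction ρ _ (fun _ _ => add) zero h

theorem of_separable
    (h : ∀ (x : I → ℂ) (y : J → ℂ),
      qRHLAt A E1 E2 B (vecMulVec x (star x) ⊗ₖ vecMulVec y (star y)))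
    {ρ : Matrix (I × J) (I × J) ℂ} (hρ : Separable ρ) : qRHLAt A E1 E2 B ρ := by
  obtain ⟨n, σ, τ, hσ, hτ, rfl⟩ := hρ
  refine sum _ fun k _ => ?_
  obtain ⟨_, v, hv⟩ := posSemidef_iff_eq_sum_vecMulVec.mp (hσ k)
  obtain ⟨_, w, hw⟩ := posSemidef_iff_eq_sum_vecMulVec.mp (hτ k)
  rw [hv, hw, sum_kronecker_sum]
  exact sum _ fun i _ => sum _ fun j _ => h (v i) (w j)

theorem kronecker_vecMulVec_of_pure
    (h : ∀ (ψ1 : I → ℂ) (ψ2 : J → ℂ), star ψ1 ⬝ᵥ ψ1 = 1 → star ψ2 ⬝ᵥ ψ2 = 1 →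
      qRHLAt A E1 E2 B (vecMulVec ψ1 (star ψ1) ⊗ₖ vecMulVec ψ2 (star ψ2)))
    (x : I → ℂ) (y : J → ℂ) :
    qRHLAt A E1 E2 B (vecMulVec x (star x) ⊗ₖ vecMulVec y (star y)) := by
  rcases eq_or_ne x 0 with rfl | hx
  · simpa using zero
  rcases eq_or_ne y 0 with rfl | hy
  · simpa using zero
  obtain ⟨r, ψ1, hψ1, rfl⟩ := exists_real_smul_of_dotProduct_star_self_eq_one hx
  obtain ⟨s, ψ2, hψ2, rfl⟩ := exists_real_smul_of_dotProduct_star_self_eq_one hy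
  rw [vecMulVec_real_smul_star, vecMulVec_real_smul_star, smul_kronecker, kronecker_smul,
    smul_smul]
  exact (h ψ1 ψ2 hψ1 hψ2).smul (by positivity)

end qRHLAt

theorem qRHLAt_pure_iff {I J : Type*} [Fintype I] [Fintype J] {A B : Matrix (I × J) (I × J) ℂ}
    {E1 : Matrix I I ℂ → Matrix I I ℂ} {E2 : Matrix J J ℂ → Matrix J J ℂ}
    {ψ1 : I → ℂ} {ψ2 : J → ℂ} (h1 : star ψ1 ⬝ᵥ ψ1 = 1) (h2 : star ψ2 ⬝ᵥ ψ2 = 1) :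
    qRHLAt A E1 E2 B (vecMulVec ψ1 (star ψ1) ⊗ₖ vecMulVec ψ2 (star ψ2)) ↔
      ∃ ρ' : Matrix (I × J) (I × J) ℂ, ρ'.PosSemidef ∧ Separable ρ' ∧
        trB ρ' = E1 (vecMulVec ψ1 (star ψ1)) ∧
        trA ρ' = E2 (vecMulVec ψ2 (star ψ2)) ∧
        (star (fun p : I × J => ψ1 p.1 * ψ2 p.2) ⬝ᵥ
            A.mulVec (fun p : I × J => ψ1 p.1 * ψ2 p.2)).re ≤
          (Matrix.trace (B * ρ')).re := by
  rw [qRHLAt, trB_kronecker, trA_kronecker, trace_vecMulVec, trace_vecMulVec, dotProduct_comm,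
    h2, dotProduct_comm, h1, one_smul, one_smul, vecMulVec_star_kronecker_vecMulVec_star,
    trace_mul_vecMulVec_star]

theorem qRHL_iff_pure_general {I J : Type*} [Fintype I] [Fintype J]
    (A B : Matrix (I × J) (I × J) ℂ)
    (E1 : Matrix I I ℂ →ₗ[ℂ] Matrix I I ℂ) (E2 : Matrix J J ℂ →ₗ[ℂ] Matrix J J ℂ) :
    qRHL A E1 E2 B ↔
      ∀ (ψ1 : I → ℂ) (ψ2 : J → ℂ), star ψ1 ⬝ᵥ ψ1 = 1 → star ψ2 ⬝ᵥ ψ2 = 1 →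
        ∃ ρ' : Matrix (I × J) (I × J) ℂ, ρ'.PosSemidef ∧ Separable ρ' ∧
          trB ρ' = E1 (vecMulVec ψ1 (star ψ1)) ∧
          trA ρ' = E2 (vecMulVec ψ2 (star ψ2)) ∧
          (star (fun p : I × J => ψ1 p.1 * ψ2 p.2) ⬝ᵥ
              A.mulVec (fun p : I × J => ψ1 p.1 * ψ2 p.2)).re ≤
            (Matrix.trace (B * ρ')).re := by
  constructor
  · intro h ψ1 ψ2 h1 h2
    have hψ1 := posSemidef_vecMulVec_self_star ψ1
    have hψ2 := posSemidef_vecMulVec_self_star ψ2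
    exact (qRHLAt_pure_iff h1 h2).mp (h _ (hψ1.kronecker hψ2) (.kronecker hψ1 hψ2))
  · intro h ρ _ hρ
    refine qRHLAt.of_separable (qRHLAt.kronecker_vecMulVec_of_pure fun ψ1 ψ2 h1 h2 => ?_) hρ
    exact (qRHLAt_pure_iff h1 h2).mpr (h ψ1 ψ2 h1 h2)

/-- Characterization of expectation-qRHL via pure initial states
(Lemma `qrhl.pure` of the paper). -/
theorem qRHL_iff_pure {I J : Type*} [Fintype I] [Fintype J]
    (A B : Matrix (I × J) (I × J) ℂ) (hA : A.PosSemidef) (hB : B.PosSemidef)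
    (E1 : Matrix I I ℂ →ₗ[ℂ] Matrix I I ℂ) (E2 : Matrix J J ℂ →ₗ[ℂ] Matrix J J ℂ)
    (hE1 : ∀ ρ : Matrix I I ℂ, ρ.PosSemidef → (E1 ρ).PosSemidef)
    (hE2 : ∀ σ : Matrix J J ℂ, σ.PosSemidef → (E2 σ).PosSemidef) :
    qRHL A E1 E2 B ↔
      ∀ (ψ1 : I → ℂ) (ψ2 : J → ℂ), star ψ1 ⬝ᵥ ψ1 = 1 → star ψ2 ⬝ᵥ ψ2 = 1 →
        ∃ ρ' : Matrix (I × J) (I × J) ℂ, ρ'.PosSemidef ∧ Separable ρ' ∧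
          trB ρ' = E1 (vecMulVec ψ1 (star ψ1)) ∧
          trA ρ' = E2 (vecMulVec ψ2 (star ψ2)) ∧
          (star (fun p : I × J => ψ1 p.1 * ψ2 p.2) ⬝ᵥ
              A.mulVec (fun p : I × J => ψ1 p.1 * ψ2 p.2)).re ≤
            (Matrix.trace (B * ρ')).re :=
  qRHL_iff_pure_general A B E1 E2
end
end

section
/- Let I, J be finite types, E1 : Matrix I I ℂ → Matrix I I ℂ and E2 : Matrix J J ℂ → Matrix J J ℂ arbitrary functions, and A, B expectations on I × J. For an expectation C on I × J let C˜ denote the expectation on J × I obtained by reindexing along the swap equivalence (J × I) ≃ (I × J), i.e. C˜ (j,i) (j',i') = C (i,j) (i',j'). If qRHL(A, E1, E2, B) holds (over I × J), then qRHL(A˜, E2, E1, B˜) holds (over J × I). [Rule Sym] -/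
open Matrix Kronecker ComplexOrder

noncomputable section

theorem Matrix.trace_submatrix_equiv {m n R : Type*} [Fintype m] [Fintype n] [AddCommMonoid R]
    (M : Matrix n n R) (e : m ≃ n) : (M.submatrix e e).trace = M.trace :=
  Fintype.sum_equiv e _ _ fun _ => rfl

section SwapFactors

variable {I J : Type*}

theorem trB_submatrix_swap [Fintype I] (ρ : Matrix (I × J) (I × J) ℂ) :
    trB (ρ.submatrix Prod.swap Prod.swap) = trA ρ :=
  rfl

theorem trA_submatrix_swap [Fintype J] (ρ : Matrix (I × J) (I × J) ℂ) :
    trA (ρ.submatrix Prod.swap Prod.swap) = trB ρ :=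
  rfl

theorem trace_mul_submatrix_swap [Fintype I] [Fintype J] (A ρ : Matrix (I × J) (I × J) ℂ) :
    (A.submatrix Prod.swap Prod.swap * ρ.submatrix Prod.swap Prod.swap).trace = (A * ρ).trace := by
  rw [← Equiv.coe_prodComm, Matrix.submatrix_mul_equiv, Matrix.trace_submatrix_equiv]

theorem Separable.submatrix_swap [Fintype I] [Fintype J] {ρ : Matrix (I × J) (I × J) ℂ}
    (hρ : Separable ρ) : Separable (ρ.submatrix Prod.swap Prod.swap) := by
  obtain ⟨n, σ, τ, hσ, hτ, rfl⟩ := hρ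
  refine ⟨n, τ, σ, hτ, hσ, ?_⟩
  ext ⟨j, i⟩ ⟨j', i'⟩
  simp [kroneckerMap_apply, Matrix.sum_apply, mul_comm]

end SwapFactors

theorem qRHL_sym_general {I J : Type*} [Fintype I] [Fintype J]
    (A B : Matrix (I × J) (I × J) ℂ)
    (E1 : Matrix I I ℂ → Matrix I I ℂ) (E2 : Matrix J J ℂ → Matrix J J ℂ)
    (h : qRHL A E1 E2 B) :
    qRHL (Matrix.of fun p q : J × I => A (p.2, p.1) (q.2, q.1)) E2 E1
      (Matrix.of fun p q : J × I => B (p.2, p.1) (q.2, q.1)) := by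
  intro ρ hρ hsep
  obtain ⟨ρ', hρ', hsep', htrB, htrA, hle⟩ :=
    h (ρ.submatrix Prod.swap Prod.swap) (hρ.submatrix _) hsep.submatrix_swap
  refine ⟨ρ'.submatrix Prod.swap Prod.swap, hρ'.submatrix _, hsep'.submatrix_swap, ?_, ?_, ?_⟩
  · rwa [trB_submatrix_swap, ← trA_submatrix_swap ρ]
  · rwa [trA_submatrix_swap, ← trB_submatrix_swap ρ]
  · rw [← trace_mul_submatrix_swap A, ← trace_mul_submatrix_swap B] at hle
    -- swapping twice is definitionally the identity
    exact hle

/-- Rule Sym: if `qRHL(A, E1, E2, B)` holds over `I × J`, then the swapped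
judgment `qRHL(A˜, E2, E1, B˜)` holds over `J × I`. -/
theorem qRHL_sym {I J : Type*} [Fintype I] [Fintype J]
    (A B : Matrix (I × J) (I × J) ℂ) (hA : A.PosSemidef) (hB : B.PosSemidef)
    (E1 : Matrix I I ℂ → Matrix I I ℂ) (E2 : Matrix J J ℂ → Matrix J J ℂ)
    (h : qRHL A E1 E2 B) :
    qRHL (Matrix.of fun p q : J × I => A (p.2, p.1) (q.2, q.1)) E2 E1
      (Matrix.of fun p q : J × I => B (p.2, p.1) (q.2, q.1)) :=
  qRHL_sym_general A B E1 E2 h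
end
end

section
/- Let I, J be finite types, A, B, C expectations on I × J, and E1, F1 : Matrix I I ℂ → Matrix I I ℂ, E2, F2 : Matrix J J ℂ → Matrix J J ℂ arbitrary functions. If qRHL(A, E1, E2, B) and qRHL(B, F1, F2, C) hold, then qRHL(A, F1 ∘ E1, F2 ∘ E2, C) holds. [Rule Seq] -/
open Matrix Kronecker ComplexOrder

noncomputable section

/-- Rule Seq: judgments compose sequentially. -/
theorem qRHL_seq {I J : Type*} [Fintype I] [Fintype J]
    (A B C : Matrix (I × J) (I × J) ℂ)
    (hA : A.PosSemidef) (hB : B.PosSemidef) (hC : C.PosSemidef)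
    (E1 F1 : Matrix I I ℂ → Matrix I I ℂ) (E2 F2 : Matrix J J ℂ → Matrix J J ℂ)
    (h1 : qRHL A E1 E2 B) (h2 : qRHL B F1 F2 C) :
    qRHL A (F1 ∘ E1) (F2 ∘ E2) C := by
  intro ρ hρ hsep
  obtain ⟨ρ', hρ', hsep', hB1, hA1, hle1⟩ := h1 ρ hρ hsep
  obtain ⟨ρ'', hρ'', hsep'', hB2, hA2, hle2⟩ := h2 ρ' hρ' hsep'
  exact ⟨ρ'', hρ'', hsep'', by simp [hB2, hB1], by simp [hA2, hA1], le_trans hle1 hle2⟩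
end
end

section
/- Let I, J be finite types, A, A', B, B' expectations on I × J, and E1, E2 arbitrary functions on matrices over I and J respectively. If A - A' is positive semidefinite, B' - B is positive semidefinite, and qRHL(A, E1, E2, B) holds, then qRHL(A', E1, E2, B') holds. [Rule Conseq] -/
open Matrix Kronecker ComplexOrder

noncomputable section

namespace Matrix

variable {n 𝕜 : Type*} [Fintype n] [RCLike 𝕜]

-- Writing `M = Cᴴ * C`, the trace `tr (M * ρ) = tr (C * ρ * Cᴴ)` is that of a PSD matrix.
theorem PosSemidef.trace_mul_nonneg {M ρ : Matrix n n 𝕜} (hM : M.PosSemidef)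
    (hρ : ρ.PosSemidef) : 0 ≤ trace (M * ρ) := by
  classical
  obtain ⟨C, rfl⟩ : ∃ C : Matrix n n 𝕜, M = star C * C := by
    open scoped MatrixOrder in
    exact CStarAlgebra.nonneg_iff_eq_star_mul_self.mp hM.nonneg
  rw [Matrix.mul_assoc, trace_mul_comm, Matrix.mul_assoc, ← Matrix.mul_assoc]
  exact (hρ.mul_mul_conjTranspose_same C).trace_nonneg

theorem trace_mul_le_trace_mul_of_posSemidef_sub {M N ρ : Matrix n n 𝕜}
    (hMN : (M - N).PosSemidef) (hρ : ρ.PosSemidef) : trace (N * ρ) ≤ trace (M * ρ) := by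
  simpa only [Matrix.sub_mul, trace_sub, sub_nonneg] using hMN.trace_mul_nonneg hρ

end Matrix

theorem qRHL_conseq_general {I J : Type*} [Fintype I] [Fintype J]
    (A A' B B' : Matrix (I × J) (I × J) ℂ)
    (E1 : Matrix I I ℂ → Matrix I I ℂ) (E2 : Matrix J J ℂ → Matrix J J ℂ)
    (hAA' : (A - A').PosSemidef) (hBB' : (B' - B).PosSemidef)
    (h : qRHL A E1 E2 B) :
    qRHL A' E1 E2 B' := by
  intro ρ hρ hsep
  obtain ⟨ρ', hρ', hsep', htrB, htrA, hle⟩ := h ρ hρ hsep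
  refine ⟨ρ', hρ', hsep', htrB, htrA, ?_⟩
  calc (trace (A' * ρ)).re
      ≤ (trace (A * ρ)).re :=
        Complex.re_le_re (trace_mul_le_trace_mul_of_posSemidef_sub hAA' hρ)
    _ ≤ (trace (B * ρ')).re := hle
    _ ≤ (trace (B' * ρ')).re :=
        Complex.re_le_re (trace_mul_le_trace_mul_of_posSemidef_sub hBB' hρ')

/-- Rule Conseq: pre-expectations may be weakened and post-expectations
strengthened. -/
theorem qRHL_conseq {I J : Type*} [Fintype I] [Fintype J]
    (A A' B B' : Matrix (I × J) (I × J) ℂ)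
    (hA : A.PosSemidef) (hA' : A'.PosSemidef) (hB : B.PosSemidef) (hB' : B'.PosSemidef)
    (E1 : Matrix I I ℂ → Matrix I I ℂ) (E2 : Matrix J J ℂ → Matrix J J ℂ)
    (hAA' : (A - A').PosSemidef) (hBB' : (B' - B).PosSemidef)
    (h : qRHL A E1 E2 B) :
    qRHL A' E1 E2 B' :=
  qRHL_conseq_general A A' B B' E1 E2 hAA' hBB' h
end
end

section
/- Let X, X', J be finite types, set I := X × X', let ψ : X → ℂ be a unit vector, and let A be an expectation on I × J. Define E : Matrix I I ℂ → Matrix I I ℂ by E(ρ) (x,x') (y,y') = ψ x * star (ψ y) * (∑ a, ρ (a,x') (a,y')) (i.e. E(ρ) = |ψ⟩⟨ψ| ⊗ tr_X(ρ)), and define the preexpectation P : Matrix (I × J) (I × J) ℂ by P ((x,x'),j) ((y,y'),j') = if x = y then ∑ a, ∑ b, star (ψ a) * A ((a,x'),j) ((b,y'),j') * ψ b else 0 (i.e. P = 1_X ⊗ (ψᴴ ⊗ 1) A (ψ ⊗ 1)). Then the judgment qRHL(P, E, id, A) holds. [Rule Init1] -/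
open Matrix Kronecker ComplexOrder

noncomputable section

/-! ### Auxiliary lemmas -/

lemma psd_kraus_sum {n m ι : Type*} [Fintype n] [Fintype m] [Fintype ι]
    {ρ : Matrix m m ℂ} (hρ : ρ.PosSemidef) (K : ι → Matrix n m ℂ) :
    (∑ a, K a * ρ * (K a)ᴴ).PosSemidef := by
  refine Finset.sum_induction _ _ (fun a b ha hb => ha.add hb) Matrix.PosSemidef.zero ?_
  intro a _
  exact hρ.mul_mul_conjTranspose_same (K a)

section Kraus
variable {X X' J : Type*} [Fintype X] [Fintype X'] [Fintype J] [DecidableEq X]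
  [DecidableEq X'] [DecidableEq J]

/-- The Kraus operators of the channel `ρ ↦ |ψ⟩⟨ψ| ⊗ tr_X ρ` on the big space. -/
def Kr (ψ : X → ℂ) (a : X) : Matrix ((X × X') × J) ((X × X') × J) ℂ :=
  Matrix.of fun p q => ψ p.1.1 * (if q = ((a, p.1.2), p.2) then 1 else 0)

lemma Kr_mul (ψ : X → ℂ) (a : X) (ρ : Matrix ((X × X') × J) ((X × X') × J) ℂ) :
    Kr ψ a * ρ * (Kr ψ a)ᴴ = Matrix.of (fun p q =>
      ψ p.1.1 * star (ψ q.1.1) * ρ ((a, p.1.2), p.2) ((a, q.1.2), q.2)) := by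
  ext p q
  simp [Kr, Matrix.mul_apply, Matrix.conjTranspose_apply, mul_ite, ite_mul,
    mul_zero, zero_mul, mul_one, one_mul, Finset.sum_ite_eq', apply_ite star]
  ring

lemma Kr_conj (ψ : X → ℂ) (A : Matrix ((X × X') × J) ((X × X') × J) ℂ) :
    ∑ a, (Kr ψ a)ᴴ * A * Kr ψ a = Matrix.of (fun p q : (X × X') × J =>
      if p.1.1 = q.1.1 then
        ∑ a, ∑ b, star (ψ a) * A ((a, p.1.2), p.2) ((b, q.1.2), q.2) * ψ b
      else 0) := by
  ext p q
  obtain ⟨⟨x, x'⟩, j⟩ := p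
  obtain ⟨⟨y, y'⟩, j'⟩ := q
  simp [Kr, Matrix.mul_apply, Matrix.conjTranspose_apply, mul_ite, ite_mul,
    mul_zero, zero_mul, mul_one, one_mul, apply_ite star, Fintype.sum_prod_type,
    Prod.mk.injEq, Finset.sum_ite_eq, Finset.sum_ite_eq', and_assoc,
    Matrix.sum_apply, ite_and, Finset.sum_mul, Finset.mul_sum]
  rw [Finset.sum_comm]

/-- Kraus operators of the small channel `σ ↦ |ψ⟩⟨ψ| ⊗ tr_X σ`. -/
def Lr (ψ : X → ℂ) (a : X) : Matrix (X × X') (X × X') ℂ :=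
  Matrix.of fun p q => ψ p.1 * (if q = (a, p.2) then 1 else 0)

lemma Lr_mul (ψ : X → ℂ) (a : X) (σ : Matrix (X × X') (X × X') ℂ) :
    Lr ψ a * σ * (Lr ψ a)ᴴ = Matrix.of (fun p q =>
      ψ p.1 * star (ψ q.1) * σ (a, p.2) (a, q.2)) := by
  ext p q
  simp [Lr, Matrix.mul_apply, Matrix.conjTranspose_apply, mul_ite, ite_mul,
    mul_zero, zero_mul, mul_one, one_mul, Finset.sum_ite_eq', apply_ite star]
  ring

lemma phi_psd (ψ : X → ℂ) {σ : Matrix (X × X') (X × X') ℂ} (hσ : σ.PosSemidef) :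
    (Matrix.of fun p q : X × X' =>
      ψ p.1 * star (ψ q.1) * ∑ a, σ (a, p.2) (a, q.2)).PosSemidef := by
  have h : (Matrix.of fun p q : X × X' =>
      ψ p.1 * star (ψ q.1) * ∑ a, σ (a, p.2) (a, q.2))
      = ∑ a, Lr ψ a * σ * (Lr ψ a)ᴴ := by
    ext p q
    simp [Lr_mul, Matrix.sum_apply, Finset.mul_sum]
  rw [h]
  exact psd_kraus_sum hσ _

end Kraus

/-- Rule Init1: initializing the `X`-part of the left program with the
pure state `ψ`. -/
theorem qRHL_init1 {X X' J : Type*} [Fintype X] [Fintype X'] [Fintype J]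
    [DecidableEq X]
    (ψ : X → ℂ) (hψ : star ψ ⬝ᵥ ψ = 1)
    (A : Matrix ((X × X') × J) ((X × X') × J) ℂ) (hA : A.PosSemidef) :
    qRHL
      (Matrix.of fun p q : (X × X') × J =>
        if p.1.1 = q.1.1 then
          ∑ a, ∑ b, star (ψ a) * A ((a, p.1.2), p.2) ((b, q.1.2), q.2) * ψ b
        else 0)
      (fun ρ => Matrix.of fun p q : X × X' =>
        ψ p.1 * star (ψ q.1) * ∑ a, ρ (a, p.2) (a, q.2))
      id A := by
  classical
  intro ρ hρ hsep
  set ρ' : Matrix ((X × X') × J) ((X × X') × J) ℂ :=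
    Matrix.of (fun p q => ψ p.1.1 * star (ψ q.1.1) *
      ∑ a, ρ ((a, p.1.2), p.2) ((a, q.1.2), q.2)) with hρ'def
  have hρ'eq : ρ' = ∑ a, Kr ψ a * ρ * (Kr ψ a)ᴴ := by
    ext p q
    simp [hρ'def, Kr_mul, Matrix.sum_apply, Finset.mul_sum]
  refine ⟨ρ', ?_, ?_, ?_, ?_, ?_⟩
  · rw [hρ'eq]; exact psd_kraus_sum hρ _
  · -- separability
    obtain ⟨n, σ, τ, hσ, hτ, hsum⟩ := hsep
    refine ⟨n, fun k => Matrix.of fun p q : X × X' =>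
      ψ p.1 * star (ψ q.1) * ∑ a, σ k (a, p.2) (a, q.2), τ,
      fun k => phi_psd ψ (hσ k), hτ, ?_⟩
    ext p q
    simp only [hρ'def, hsum, Matrix.of_apply, Matrix.sum_apply,
      Matrix.kroneckerMap_apply, Finset.mul_sum]
    rw [Finset.sum_comm]
    refine Finset.sum_congr rfl fun k _ => ?_
    rw [Finset.sum_mul]
    exact Finset.sum_congr rfl fun a _ => by ring
  · -- trB
    ext p q
    simp only [trB, hρ'def, Matrix.of_apply, Finset.mul_sum]
    rw [Finset.sum_comm]
  · -- trA
    ext j j'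
    simp only [trA, hρ'def, Matrix.of_apply, id]
    calc ∑ i : X × X', ψ i.1 * star (ψ i.1) * ∑ a, ρ ((a, i.2), j) ((a, i.2), j')
        = ∑ x : X, ∑ x' : X', ψ x * star (ψ x) * ∑ a, ρ ((a, x'), j) ((a, x'), j') := by
          rw [Fintype.sum_prod_type]
      _ = (∑ x : X, ψ x * star (ψ x)) * ∑ x' : X', ∑ a, ρ ((a, x'), j) ((a, x'), j') := by
          rw [Finset.sum_mul]
          exact Finset.sum_congr rfl fun x _ => by rw [Finset.mul_sum]
      _ = ∑ x' : X', ∑ a, ρ ((a, x'), j) ((a, x'), j') := by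
          have : (∑ x : X, ψ x * star (ψ x)) = 1 := by
            rw [← hψ]
            simp [dotProduct, mul_comm]
          rw [this, one_mul]
      _ = ∑ i : X × X', ρ (i, j) (i, j') := by
          rw [Fintype.sum_prod_type, Finset.sum_comm]
  · -- trace inequality (in fact equality)
    have key : Matrix.trace ((Matrix.of fun p q : (X × X') × J =>
        if p.1.1 = q.1.1 then
          ∑ a, ∑ b, star (ψ a) * A ((a, p.1.2), p.2) ((b, q.1.2), q.2) * ψ b
        else 0) * ρ) = Matrix.trace (A * ρ') := by
      rw [← Kr_conj ψ A, hρ'eq, Finset.sum_mul, Matrix.trace_sum, Finset.mul_sum,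
        Matrix.trace_sum]
      refine Finset.sum_congr rfl fun a _ => ?_
      rw [Matrix.trace_mul_comm, ← Matrix.mul_assoc, ← Matrix.mul_assoc,
        Matrix.trace_mul_comm (ρ * (Kr ψ a)ᴴ * A) (Kr ψ a), ← Matrix.mul_assoc,
        ← Matrix.mul_assoc]
      exact Matrix.trace_mul_comm _ _
    rw [key]
end
end

section
/- Let X, X', Y, Y' be finite types, set I := X × X' and J := Y × Y', let (M_t, M_f) be a binary measurement on ℂ^X and (N_t, N_f) a binary measurement on ℂ^Y. For each t ∈ {true, false} let E_t : Matrix I I ℂ → Matrix I I ℂ and F_t : Matrix J J ℂ → Matrix J J ℂ be linear maps, and let A_{t,u} (for t,u ∈ {true, false}) and B be expectations on I × J. Write M_{t,1} := (M_t ⊗ 1_{X'}) ⊗ 1_J and N_{u,2} := 1_I ⊗ (N_u ⊗ 1_{Y'}) on I × J, and set R*_{t,u}(A) := M_{t,1}ᴴ * N_{u,2}ᴴ * A * N_{u,2} * M_{t,1}. Define the if-denotations 𝐄(ρ) := E_true((M_t ⊗ 1_{X'}) * ρ * (M_t ⊗ 1_{X'})ᴴ) + E_false((M_f ⊗ 1_{X'})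 * ρ * (M_f ⊗ 1_{X'})ᴴ) and 𝐅(σ) := F_true((N_t ⊗ 1_{Y'}) * σ * (N_t ⊗ 1_{Y'})ᴴ) + F_false((N_f ⊗ 1_{Y'}) * σ * (N_f ⊗ 1_{Y'})ᴴ). If qRHL(A_{t,u}, E_t, F_u, B) holds for all four choices of t,u ∈ {true, false}, then qRHL(∑_{t,u} R*_{t,u}(A_{t,u}), 𝐄, 𝐅, B) holds. [Rule JointIf4] -/
open Matrix Kronecker ComplexOrder

noncomputable section

/-! For a separable state ρ, conjugating by the joint outcome operator `(M t ⊗ 1) ⊗ (N u ⊗ 1)`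
keeps it positive and separable, so each premise yields a final state `ρ' t u`; their sum is
the witness. Its first marginal is correct because summing the conjugated states over the
outcomes `u` of the second measurement leaves, by completeness `∑ (N u)ᴴ N u = 1`, only the
conjugation by `M t ⊗ 1` of the first marginal, and symmetrically for the second marginal.
The expectation bound is the sum of the four premises, via `tr (Pᴴ A P ρ) = tr (A (P ρ Pᴴ))`. -/

namespace Matrix

variable {l m n p ι α : Type*}

theorem sum_kronecker [NonUnitalNonAssocSemiring α] (s : Finset ι) (A : ι → Matrix l m α)
    (B : Matrix n p α) : (∑ i ∈ s, A i) ⊗ₖ B = ∑ i ∈ s, A i ⊗ₖ B := by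
  ext
  simp [sum_apply, Finset.sum_mul]

theorem kronecker_sum [NonUnitalNonAssocSemiring α] (s : Finset ι) (A : Matrix l m α)
    (B : ι → Matrix n p α) : A ⊗ₖ (∑ i ∈ s, B i) = ∑ i ∈ s, A ⊗ₖ B i := by
  ext
  simp [sum_apply, Finset.mul_sum]

theorem one_kronecker_mul_kronecker_one [Fintype l] [Fintype n] [DecidableEq l] [DecidableEq n]
    [CommSemiring α] (P : Matrix l l α) (Q : Matrix n n α) :
    ((1 : Matrix l l α) ⊗ₖ Q) * (P ⊗ₖ (1 : Matrix n n α)) = P ⊗ₖ Q := by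
  rw [← mul_kronecker_mul, one_mul, mul_one]

theorem kronecker_one_mul_one_kronecker [Fintype l] [Fintype n] [DecidableEq l] [DecidableEq n]
    [CommSemiring α] (P : Matrix l l α) (Q : Matrix n n α) :
    (P ⊗ₖ (1 : Matrix n n α)) * ((1 : Matrix l l α) ⊗ₖ Q) = P ⊗ₖ Q := by
  rw [← mul_kronecker_mul, one_mul, mul_one]

theorem sum_conjTranspose_mul_kronecker_one [Fintype ι] [Fintype m] [Fintype n] [DecidableEq m]
    [DecidableEq n] [CommSemiring α] [StarRing α] {M : ι → Matrix m m α}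
    (hM : ∑ i, (M i)ᴴ * M i = 1) :
    ∑ i, (M i ⊗ₖ (1 : Matrix n n α))ᴴ * (M i ⊗ₖ (1 : Matrix n n α)) = 1 := by
  simp only [conjTranspose_kronecker, conjTranspose_one, ← mul_kronecker_mul, one_mul,
    ← sum_kronecker, hM, one_kronecker_one]

theorem trace_conjTranspose_mul_mul_mul [Fintype m] [Fintype n] [CommSemiring α] [StarRing α]
    (P : Matrix m n α) (A : Matrix m m α) (ρ : Matrix n n α) :
    trace (Pᴴ * A * P * ρ) = trace (A * (P * ρ * Pᴴ)) := by
  rw [Matrix.mul_assoc, Matrix.mul_assoc, trace_mul_comm]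
  simp only [Matrix.mul_assoc]

end Matrix

section Separable

variable {I J : Type*} [Fintype I] [Fintype J]

theorem separable_zero : Separable (0 : Matrix (I × J) (I × J) ℂ) :=
  ⟨0, 0, 0, finZeroElim, finZeroElim, by simp⟩

theorem Separable.add_s10 {ρ₁ ρ₂ : Matrix (I × J) (I × J) ℂ} (h₁ : Separable ρ₁)
    (h₂ : Separable ρ₂) : Separable (ρ₁ + ρ₂) := by
  obtain ⟨n₁, σ₁, τ₁, hσ₁, hτ₁, rfl⟩ := h₁
  obtain ⟨n₂, σ₂, τ₂, hσ₂, hτ₂, rfl⟩ := h₂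
  exact ⟨n₁ + n₂, Fin.append σ₁ σ₂, Fin.append τ₁ τ₂,
    Fin.addCases (by simpa using hσ₁) (by simpa using hσ₂),
    Fin.addCases (by simpa using hτ₁) (by simpa using hτ₂), by simp [Fin.sum_univ_add]⟩

theorem Separable.sum {ι : Type*} {s : Finset ι} {ρ : ι → Matrix (I × J) (I × J) ℂ}
    (h : ∀ k ∈ s, Separable (ρ k)) : Separable (∑ k ∈ s, ρ k) :=
  Finset.sum_induction ρ Separable (fun _ _ => Separable.add_s10) separable_zero h

theorem Separable.kronecker_conj {ρ : Matrix (I × J) (I × J) ℂ} (h : Separable ρ)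
    (P : Matrix I I ℂ) (Q : Matrix J J ℂ) : Separable ((P ⊗ₖ Q) * ρ * (P ⊗ₖ Q)ᴴ) := by
  obtain ⟨n, σ, τ, hσ, hτ, rfl⟩ := h
  refine ⟨n, fun k => P * σ k * Pᴴ, fun k => Q * τ k * Qᴴ,
    fun k => (hσ k).mul_mul_conjTranspose_same P, fun k => (hτ k).mul_mul_conjTranspose_same Q, ?_⟩
  simp only [Finset.mul_sum, Finset.sum_mul, conjTranspose_kronecker, mul_kronecker_mul]

end Separable

section PartialTrace

variable {I J : Type*}

variable [Fintype J] in
theorem trB_sum {ι : Type*} (s : Finset ι) (ρ : ι → Matrix (I × J) (I × J) ℂ) :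
    trB (∑ k ∈ s, ρ k) = ∑ k ∈ s, trB (ρ k) := by
  ext
  simp only [trB, of_apply, Matrix.sum_apply]
  exact Finset.sum_comm

variable [Fintype I] in
theorem trA_sum {ι : Type*} (s : Finset ι) (ρ : ι → Matrix (I × J) (I × J) ℂ) :
    trA (∑ k ∈ s, ρ k) = ∑ k ∈ s, trA (ρ k) := by
  ext
  simp only [trA, of_apply, Matrix.sum_apply]
  exact Finset.sum_comm

variable [Fintype I] [Fintype J]

variable [DecidableEq J] in
theorem trB_kronecker_one_mul (P : Matrix I I ℂ) (ρ : Matrix (I × J) (I × J) ℂ) :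
    trB ((P ⊗ₖ (1 : Matrix J J ℂ)) * ρ) = P * trB ρ := by
  ext
  simpa [trB, mul_apply, Fintype.sum_prod_type, one_apply, Finset.mul_sum] using Finset.sum_comm

variable [DecidableEq J] in
theorem trB_mul_kronecker_one (P : Matrix I I ℂ) (ρ : Matrix (I × J) (I × J) ℂ) :
    trB (ρ * (P ⊗ₖ (1 : Matrix J J ℂ))) = trB ρ * P := by
  ext
  simpa [trB, mul_apply, Fintype.sum_prod_type, one_apply, Finset.sum_mul] using Finset.sum_comm

variable [DecidableEq I] in
theorem trB_one_kronecker_mul_comm (Q : Matrix J J ℂ) (ρ : Matrix (I × J) (I × J) ℂ) :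
    trB (((1 : Matrix I I ℂ) ⊗ₖ Q) * ρ) = trB (ρ * ((1 : Matrix I I ℂ) ⊗ₖ Q)) := by
  ext
  simpa [trB, mul_apply, Fintype.sum_prod_type, one_apply, mul_comm] using Finset.sum_comm

variable [DecidableEq I] in
theorem trA_one_kronecker_mul (Q : Matrix J J ℂ) (ρ : Matrix (I × J) (I × J) ℂ) :
    trA (((1 : Matrix I I ℂ) ⊗ₖ Q) * ρ) = Q * trA ρ := by
  ext
  simpa [trA, mul_apply, Fintype.sum_prod_type, one_apply, Finset.mul_sum] using Finset.sum_comm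

variable [DecidableEq I] in
theorem trA_mul_one_kronecker (Q : Matrix J J ℂ) (ρ : Matrix (I × J) (I × J) ℂ) :
    trA (ρ * ((1 : Matrix I I ℂ) ⊗ₖ Q)) = trA ρ * Q := by
  ext
  simpa [trA, mul_apply, Fintype.sum_prod_type, one_apply, Finset.sum_mul] using Finset.sum_comm

variable [DecidableEq J] in
theorem trA_kronecker_one_mul_comm (P : Matrix I I ℂ) (ρ : Matrix (I × J) (I × J) ℂ) :
    trA ((P ⊗ₖ (1 : Matrix J J ℂ)) * ρ) = trA (ρ * (P ⊗ₖ (1 : Matrix J J ℂ))) := by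
  ext
  simpa [trA, mul_apply, Fintype.sum_prod_type, one_apply, mul_comm] using Finset.sum_comm

variable [DecidableEq I] [DecidableEq J]

theorem trB_kronecker_conj (P : Matrix I I ℂ) (Q : Matrix J J ℂ) (ρ : Matrix (I × J) (I × J) ℂ) :
    trB ((P ⊗ₖ Q) * ρ * (P ⊗ₖ Q)ᴴ) = P * trB (ρ * ((1 : Matrix I I ℂ) ⊗ₖ (Qᴴ * Q))) * Pᴴ :=
  calc trB ((P ⊗ₖ Q) * ρ * (P ⊗ₖ Q)ᴴ)
      = trB ((P ⊗ₖ 1) * ((1 ⊗ₖ Q) * (ρ * (1 ⊗ₖ Qᴴ))) * (Pᴴ ⊗ₖ 1)) := by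
        rw [← kronecker_one_mul_one_kronecker P Q, conjTranspose_mul, conjTranspose_kronecker,
          conjTranspose_kronecker, conjTranspose_one, conjTranspose_one]
        simp only [Matrix.mul_assoc]
    _ = P * trB (ρ * (1 ⊗ₖ Qᴴ) * (1 ⊗ₖ Q)) * Pᴴ := by
        rw [trB_mul_kronecker_one, trB_kronecker_one_mul, trB_one_kronecker_mul_comm]
    _ = P * trB (ρ * (1 ⊗ₖ (Qᴴ * Q))) * Pᴴ := by
        rw [Matrix.mul_assoc ρ, ← mul_kronecker_mul, one_mul]

theorem trA_kronecker_conj (P : Matrix I I ℂ) (Q : Matrix J J ℂ) (ρ : Matrix (I × J) (I × J) ℂ) :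
    trA ((P ⊗ₖ Q) * ρ * (P ⊗ₖ Q)ᴴ) = Q * trA (ρ * ((Pᴴ * P) ⊗ₖ (1 : Matrix J J ℂ))) * Qᴴ :=
  calc trA ((P ⊗ₖ Q) * ρ * (P ⊗ₖ Q)ᴴ)
      = trA ((1 ⊗ₖ Q) * ((P ⊗ₖ 1) * (ρ * (Pᴴ ⊗ₖ 1))) * (1 ⊗ₖ Qᴴ)) := by
        rw [← one_kronecker_mul_kronecker_one P Q, conjTranspose_mul, conjTranspose_kronecker,
          conjTranspose_kronecker, conjTranspose_one, conjTranspose_one]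
        simp only [Matrix.mul_assoc]
    _ = Q * trA (ρ * (Pᴴ ⊗ₖ 1) * (P ⊗ₖ 1)) * Qᴴ := by
        rw [trA_mul_one_kronecker, trA_one_kronecker_mul, trA_kronecker_one_mul_comm]
    _ = Q * trA (ρ * ((Pᴴ * P) ⊗ₖ 1)) * Qᴴ := by
        rw [Matrix.mul_assoc ρ, ← mul_kronecker_mul, one_mul]

theorem sum_trB_kronecker_conj {ι : Type*} [Fintype ι] (P : Matrix I I ℂ) {Q : ι → Matrix J J ℂ}
    (hQ : ∑ u, (Q u)ᴴ * Q u = 1) (ρ : Matrix (I × J) (I × J) ℂ) :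
    ∑ u, trB ((P ⊗ₖ Q u) * ρ * (P ⊗ₖ Q u)ᴴ) = P * trB ρ * Pᴴ := by
  simp only [trB_kronecker_conj, ← Finset.sum_mul, ← Finset.mul_sum, ← trB_sum,
    ← kronecker_sum, hQ, one_kronecker_one, mul_one]

theorem sum_trA_kronecker_conj {ι : Type*} [Fintype ι] {P : ι → Matrix I I ℂ}
    (hP : ∑ t, (P t)ᴴ * P t = 1) (Q : Matrix J J ℂ) (ρ : Matrix (I × J) (I × J) ℂ) :
    ∑ t, trA ((P t ⊗ₖ Q) * ρ * (P t ⊗ₖ Q)ᴴ) = Q * trA ρ * Qᴴ := by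
  simp only [trA_kronecker_conj, ← Finset.sum_mul, ← Finset.mul_sum, ← trA_sum,
    ← sum_kronecker, hP, one_kronecker_one, mul_one]

end PartialTrace

theorem qRHL_jointIf4_general {X X' Y Y' : Type*}
    [Fintype X] [Fintype X'] [Fintype Y] [Fintype Y']
    [DecidableEq X] [DecidableEq X'] [DecidableEq Y] [DecidableEq Y']
    (M : Bool → Matrix X X ℂ) (N : Bool → Matrix Y Y ℂ)
    (hM : (M true)ᴴ * M true + (M false)ᴴ * M false = 1)
    (hN : (N true)ᴴ * N true + (N false)ᴴ * N false = 1)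
    (E : Bool → (Matrix (X × X') (X × X') ℂ →ₗ[ℂ] Matrix (X × X') (X × X') ℂ))
    (F : Bool → (Matrix (Y × Y') (Y × Y') ℂ →ₗ[ℂ] Matrix (Y × Y') (Y × Y') ℂ))
    (A : Bool → Bool → Matrix ((X × X') × (Y × Y')) ((X × X') × (Y × Y')) ℂ)
    (B : Matrix ((X × X') × (Y × Y')) ((X × X') × (Y × Y')) ℂ)
    (h : ∀ t u, qRHL (A t u) (E t) (F u) B) :
    qRHL
      (∑ t : Bool, ∑ u : Bool,
        ((M t ⊗ₖ (1 : Matrix X' X' ℂ)) ⊗ₖ (1 : Matrix (Y × Y') (Y × Y') ℂ))ᴴ *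
          ((1 : Matrix (X × X') (X × X') ℂ) ⊗ₖ (N u ⊗ₖ (1 : Matrix Y' Y' ℂ)))ᴴ *
          A t u *
          ((1 : Matrix (X × X') (X × X') ℂ) ⊗ₖ (N u ⊗ₖ (1 : Matrix Y' Y' ℂ))) *
          ((M t ⊗ₖ (1 : Matrix X' X' ℂ)) ⊗ₖ (1 : Matrix (Y × Y') (Y × Y') ℂ)))
      (fun ρ => E true ((M true ⊗ₖ (1 : Matrix X' X' ℂ)) * ρ *
            (M true ⊗ₖ (1 : Matrix X' X' ℂ))ᴴ) +
          E false ((M false ⊗ₖ (1 : Matrix X' X' ℂ)) * ρ *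
            (M false ⊗ₖ (1 : Matrix X' X' ℂ))ᴴ))
      (fun σ => F true ((N true ⊗ₖ (1 : Matrix Y' Y' ℂ)) * σ *
            (N true ⊗ₖ (1 : Matrix Y' Y' ℂ))ᴴ) +
          F false ((N false ⊗ₖ (1 : Matrix Y' Y' ℂ)) * σ *
            (N false ⊗ₖ (1 : Matrix Y' Y' ℂ))ᴴ))
      B := by
  intro ρ hρ hsep
  choose ρ' hpsd hsep' htrB htrA hle using fun t u =>
    h t u _ (hρ.mul_mul_conjTranspose_same ((M t ⊗ₖ (1 : Matrix X' X' ℂ)) ⊗ₖ (N u ⊗ₖ 1)))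
      (hsep.kronecker_conj _ _)
  have hM₁ := sum_conjTranspose_mul_kronecker_one (n := X') (M := M) (by rwa [Fintype.sum_bool])
  have hN₁ := sum_conjTranspose_mul_kronecker_one (n := Y') (M := N) (by rwa [Fintype.sum_bool])
  refine ⟨∑ t, ∑ u, ρ' t u, posSemidef_sum _ fun t _ => posSemidef_sum _ fun u _ => hpsd t u,
    Separable.sum fun t _ => Separable.sum fun u _ => hsep' t u, ?_, ?_, ?_⟩
  · simp only [trB_sum, htrB, ← map_sum, sum_trB_kronecker_conj _ hN₁]
    exact Fintype.sum_bool _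
  · rw [Finset.sum_comm]
    simp only [trA_sum, htrA, ← map_sum, sum_trA_kronecker_conj hM₁]
    exact Fintype.sum_bool _
  · simp only [Finset.sum_mul, Finset.mul_sum, trace_sum, Complex.re_sum]
    refine Finset.sum_le_sum fun t _ => Finset.sum_le_sum fun u _ => ?_
    rw [← conjTranspose_mul, Matrix.mul_assoc _ _ (M t ⊗ₖ 1 ⊗ₖ 1),
      one_kronecker_mul_kronecker_one, trace_conjTranspose_mul_mul_mul]
    exact hle t u

/-- Rule JointIf4: simultaneous if-statements on both sides, with all four
branch combinations. -/
theorem qRHL_jointIf4 {X X' Y Y' : Type*}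
    [Fintype X] [Fintype X'] [Fintype Y] [Fintype Y']
    [DecidableEq X] [DecidableEq X'] [DecidableEq Y] [DecidableEq Y']
    (M : Bool → Matrix X X ℂ) (N : Bool → Matrix Y Y ℂ)
    (hM : (M true)ᴴ * M true + (M false)ᴴ * M false = 1)
    (hN : (N true)ᴴ * N true + (N false)ᴴ * N false = 1)
    (E : Bool → (Matrix (X × X') (X × X') ℂ →ₗ[ℂ] Matrix (X × X') (X × X') ℂ))
    (F : Bool → (Matrix (Y × Y') (Y × Y') ℂ →ₗ[ℂ] Matrix (Y × Y') (Y × Y') ℂ))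
    (A : Bool → Bool → Matrix ((X × X') × (Y × Y')) ((X × X') × (Y × Y')) ℂ)
    (B : Matrix ((X × X') × (Y × Y')) ((X × X') × (Y × Y')) ℂ)
    (hA : ∀ t u, (A t u).PosSemidef) (hB : B.PosSemidef)
    (h : ∀ t u, qRHL (A t u) (E t) (F u) B) :
    qRHL
      (∑ t : Bool, ∑ u : Bool,
        ((M t ⊗ₖ (1 : Matrix X' X' ℂ)) ⊗ₖ (1 : Matrix (Y × Y') (Y × Y') ℂ))ᴴ *
          ((1 : Matrix (X × X') (X × X') ℂ) ⊗ₖ (N u ⊗ₖ (1 : Matrix Y' Y' ℂ)))ᴴ *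
          A t u *
          ((1 : Matrix (X × X') (X × X') ℂ) ⊗ₖ (N u ⊗ₖ (1 : Matrix Y' Y' ℂ))) *
          ((M t ⊗ₖ (1 : Matrix X' X' ℂ)) ⊗ₖ (1 : Matrix (Y × Y') (Y × Y') ℂ)))
      (fun ρ => E true ((M true ⊗ₖ (1 : Matrix X' X' ℂ)) * ρ *
            (M true ⊗ₖ (1 : Matrix X' X' ℂ))ᴴ) +
          E false ((M false ⊗ₖ (1 : Matrix X' X' ℂ)) * ρ *
            (M false ⊗ₖ (1 : Matrix X' X' ℂ))ᴴ))
      (fun σ => F true ((N true ⊗ₖ (1 : Matrix Y' Y' ℂ)) * σ *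
            (N true ⊗ₖ (1 : Matrix Y' Y' ℂ))ᴴ) +
          F false ((N false ⊗ₖ (1 : Matrix Y' Y' ℂ)) * σ *
            (N false ⊗ₖ (1 : Matrix Y' Y' ℂ))ᴴ))
      B :=
  qRHL_jointIf4_general M N hM hN E F A B h
end
end

section
/- Let n, a, b be finite types with n nonempty, and let ψ1 : n × a → ℂ and ψ2 : n × b → ℂ be unit vectors. Define ψ : (n × a) × (n × b) → ℂ by ψ ((x,α),(y,β)) = ψ1 (x,α) * ψ2 (y,β). Let Ẽ : Matrix ((n × a) × (n × b)) ((n × a) × (n × b)) ℂ be the operator with entries Ẽ ((x,α),(y,β)) ((x',α'),(y',β')) = if α = α' ∧ β = β' then (1/2) * ((if x = x' ∧ y = y' then 1 else 0) + (if x = y' ∧ y = x' then 1 else 0)) else 0 (the projector (1 + SWAP)/2 on the two n-registers, tensored with the identity on a and b). Then (star ψ ⬝ᵥ Ẽ.mulVec ψ) = 1 if and only if there exist vectors φ : n → ℂ, φ1 : a → ℂ, φ2 : b → ℂ such that ψ1 (x,α) = φ x * φ1 α for all x, α and ψ2 (y,β) = φ y * φ2 β for all y, β. [Corollary on quantum equality]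 -/
/-!
The operator is `(1 + SWAP)/2`, so for a unit vector `ψ` its expectation is
`(1 + ⟪ψ, SWAP ψ⟫)/2`, and since `SWAP ψ` is again a unit vector this equals `1` exactly when
`SWAP ψ = ψ` (the equality case of Cauchy–Schwarz, via `‖ψ - SWAP ψ‖² = 2 - 2 Re ⟪ψ, SWAP ψ⟫`).
For `ψ = ψ1 ⊗ ψ2` swap invariance reads `ψ1 (x, α) ψ2 (y, β) = ψ1 (y, α) ψ2 (x, β)`: fixing a
nonzero entry of `ψ2` shows that `ψ1` is proportional to a column of `ψ2` in the `n`-variable,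
and symmetrically, which yields the common factor `φ`.
-/

open Matrix

namespace QuantumEquality

section DotProduct

variable {ι κ : Type*} [Fintype ι] [Fintype κ]

theorem star_dotProduct_prod_mul {R : Type*} [CommSemiring R] [StarRing R] (f : ι → R)
    (u : κ → R) :
    star (fun p : ι × κ => f p.1 * u p.2) ⬝ᵥ (fun p => f p.1 * u p.2) =
      (star f ⬝ᵥ f) * (star u ⬝ᵥ u) := by
  simp only [dotProduct, Fintype.sum_prod_type, Finset.sum_mul_sum, Pi.star_apply, star_mul']
  exact Finset.sum_congr rfl fun _ _ => Finset.sum_congr rfl fun _ _ => by ring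

theorem star_dotProduct_eq_one_iff {R : Type*} [CommRing R] [StarRing R] [PartialOrder R]
    [StarOrderedRing R] [NoZeroDivisors R] {u v : ι → R}
    (hu : star u ⬝ᵥ u = 1) (hv : star v ⬝ᵥ v = 1) : star u ⬝ᵥ v = 1 ↔ u = v := by
  refine ⟨fun h => ?_, fun h => h ▸ hu⟩
  have hvu : star v ⬝ᵥ u = 1 := by rw [star_dotProduct, h, star_one]
  have hnorm : star (u - v) ⬝ᵥ (u - v) = 0 := by
    simp only [star_sub, sub_dotProduct, dotProduct_sub, hu, hv, h, hvu]
    ring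
  exact sub_eq_zero.mp (dotProduct_star_self_eq_zero.mp hnorm)

theorem ne_zero_of_star_dotProduct_eq_one {R : Type*} [CommSemiring R] [StarRing R] [Nontrivial R]
    {v : ι → R} (hv : star v ⬝ᵥ v = 1) : v ≠ 0 := by
  rintro rfl
  simp at hv

end DotProduct

def swapRegisters (n a b : Type*) : (n × a) × (n × b) ≃ (n × a) × (n × b) where
  toFun p := ((p.2.1, p.1.2), (p.1.1, p.2.2))
  invFun p := ((p.2.1, p.1.2), (p.1.1, p.2.2))
  left_inv _ := rfl
  right_inv _ := rfl

section Projector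

open scoped ComplexOrder

variable {n a b : Type*} [Fintype n] [Fintype a] [Fintype b]
  [DecidableEq n] [DecidableEq a] [DecidableEq b]

theorem mulVec_symmetricProjector (v : (n × a) × (n × b) → ℂ) :
    (Matrix.of fun p q : (n × a) × (n × b) =>
          if p.1.2 = q.1.2 ∧ p.2.2 = q.2.2 then
            (1 / 2 : ℂ) * ((if p.1.1 = q.1.1 ∧ p.2.1 = q.2.1 then 1 else 0) +
              (if p.1.1 = q.2.1 ∧ p.2.1 = q.1.1 then 1 else 0))
          else 0).mulVec v = (1 / 2 : ℂ) • (v + v ∘ swapRegisters n a b) := by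
  ext ⟨⟨x, α⟩, ⟨y, β⟩⟩
  simp [mulVec, dotProduct, Fintype.sum_prod_type, swapRegisters, ite_and, mul_add, add_mul,
    Finset.sum_add_distrib]

theorem star_dotProduct_symmetricProjector_mulVec_eq_one_iff {v : (n × a) × (n × b) → ℂ}
    (hv : star v ⬝ᵥ v = 1) :
    star v ⬝ᵥ (Matrix.of fun p q : (n × a) × (n × b) =>
          if p.1.2 = q.1.2 ∧ p.2.2 = q.2.2 then
            (1 / 2 : ℂ) * ((if p.1.1 = q.1.1 ∧ p.2.1 = q.2.1 then 1 else 0) +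
              (if p.1.1 = q.2.1 ∧ p.2.1 = q.1.1 then 1 else 0))
          else 0).mulVec v = 1 ↔ v ∘ swapRegisters n a b = v := by
  have hswap : star (v ∘ swapRegisters n a b) ⬝ᵥ (v ∘ swapRegisters n a b) = 1 := by
    rw [← hv]
    exact (swapRegisters n a b).sum_comp fun p => star v p * v p
  rw [mulVec_symmetricProjector, dotProduct_smul, dotProduct_add, hv,
    ← (star_dotProduct_eq_one_iff hv hswap).trans eq_comm, smul_eq_mul]
  constructor
  · intro h
    linear_combination 2 * h
  · intro h
    rw [h]
    norm_num

end Projector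

section Factorization

variable {n a b K : Type*} [Field K]

theorem comp_swapRegisters_prod_eq_iff (ψ1 : n × a → K) (ψ2 : n × b → K) :
    (fun p => ψ1 p.1 * ψ2 p.2) ∘ swapRegisters n a b = (fun p => ψ1 p.1 * ψ2 p.2) ↔
      ∀ x α y β, ψ1 (y, α) * ψ2 (x, β) = ψ1 (x, α) * ψ2 (y, β) :=
  ⟨fun h x α y β => congrFun h ((x, α), (y, β)),
    fun h => funext fun ⟨⟨x, α⟩, ⟨y, β⟩⟩ => h x α y β⟩

theorem exists_eq_mul_of_proportional {ι κ : Type*} {f : ι × κ → K} {c : ι → K} {i₀ : ι}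
    (hc : c i₀ ≠ 0) (h : ∀ i j k, f (i, k) * c j = f (j, k) * c i) :
    ∃ g : κ → K, ∀ i k, f (i, k) = c i * g k :=
  ⟨fun k => f (i₀, k) / c i₀, fun i k => by field_simp; linear_combination h i i₀ k⟩

theorem exists_common_factor_of_exchange {ψ1 : n × a → K} {ψ2 : n × b → K} (h1 : ψ1 ≠ 0)
    (h2 : ψ2 ≠ 0) (h : ∀ x α y β, ψ1 (y, α) * ψ2 (x, β) = ψ1 (x, α) * ψ2 (y, β)) :
    ∃ (φ : n → K) (φ1 : a → K) (φ2 : b → K),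
      (∀ x α, ψ1 (x, α) = φ x * φ1 α) ∧ (∀ y β, ψ2 (y, β) = φ y * φ2 β) := by
  obtain ⟨⟨x₁, α₁⟩, hα₁⟩ := Function.ne_iff.mp h1
  obtain ⟨⟨y₀, β₀⟩, hβ₀⟩ := Function.ne_iff.mp h2
  obtain ⟨φ1, hφ1⟩ := exists_eq_mul_of_proportional (c := fun x => ψ2 (x, β₀)) hβ₀
    fun i j k => h j k i β₀
  obtain ⟨φ2, hφ2⟩ := exists_eq_mul_of_proportional (f := ψ2) (c := fun x => ψ1 (x, α₁)) hα₁
    fun i j k => by linear_combination h i α₁ j k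
  refine ⟨fun x => ψ2 (x, β₀), φ1, fun β => φ1 α₁ * φ2 β, hφ1, fun y β => ?_⟩
  rw [hφ2, hφ1]
  ring

end Factorization

end QuantumEquality

open QuantumEquality

theorem quantum_equality_corollary_general {n a b : Type*}
    [Fintype n] [Fintype a] [Fintype b]
    [DecidableEq n] [DecidableEq a] [DecidableEq b]
    (ψ1 : n × a → ℂ) (ψ2 : n × b → ℂ)
    (hψ1 : star ψ1 ⬝ᵥ ψ1 = 1) (hψ2 : star ψ2 ⬝ᵥ ψ2 = 1) :
    (star (fun p : (n × a) × (n × b) => ψ1 p.1 * ψ2 p.2) ⬝ᵥ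
        (Matrix.of fun p q : (n × a) × (n × b) =>
          if p.1.2 = q.1.2 ∧ p.2.2 = q.2.2 then
            (1 / 2 : ℂ) * ((if p.1.1 = q.1.1 ∧ p.2.1 = q.2.1 then 1 else 0) +
              (if p.1.1 = q.2.1 ∧ p.2.1 = q.1.1 then 1 else 0))
          else 0).mulVec (fun p : (n × a) × (n × b) => ψ1 p.1 * ψ2 p.2)) = 1 ↔
      ∃ (φ : n → ℂ) (φ1 : a → ℂ) (φ2 : b → ℂ),
        (∀ x α, ψ1 (x, α) = φ x * φ1 α) ∧ (∀ y β, ψ2 (y, β) = φ y * φ2 β) := by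
  have hψ : star (fun p : (n × a) × (n × b) => ψ1 p.1 * ψ2 p.2) ⬝ᵥ
      (fun p => ψ1 p.1 * ψ2 p.2) = 1 := by
    rw [star_dotProduct_prod_mul, hψ1, hψ2, one_mul]
  rw [star_dotProduct_symmetricProjector_mulVec_eq_one_iff hψ, comp_swapRegisters_prod_eq_iff]
  refine ⟨exists_common_factor_of_exchange (ne_zero_of_star_dotProduct_eq_one hψ1)
    (ne_zero_of_star_dotProduct_eq_one hψ2), ?_⟩
  rintro ⟨φ, φ1, φ2, h1, h2⟩ x α y β
  rw [h1, h1, h2, h2]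
  ring

/-- Corollary on quantum equality: for a separable product state
`ψ = ψ1 ⊗ ψ2`, the expectation `(1 + SWAP)/2 ⊗ 1` on the two `n`-registers
evaluates to `1` iff both `ψ1` and `ψ2` factor through a common state `φ`
on the `n`-register. -/
theorem quantum_equality_corollary {n a b : Type*}
    [Fintype n] [Fintype a] [Fintype b]
    [DecidableEq n] [DecidableEq a] [DecidableEq b] [Nonempty n]
    (ψ1 : n × a → ℂ) (ψ2 : n × b → ℂ)
    (hψ1 : star ψ1 ⬝ᵥ ψ1 = 1) (hψ2 : star ψ2 ⬝ᵥ ψ2 = 1) :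
    (star (fun p : (n × a) × (n × b) => ψ1 p.1 * ψ2 p.2) ⬝ᵥ
        (Matrix.of fun p q : (n × a) × (n × b) =>
          if p.1.2 = q.1.2 ∧ p.2.2 = q.2.2 then
            (1 / 2 : ℂ) * ((if p.1.1 = q.1.1 ∧ p.2.1 = q.2.1 then 1 else 0) +
              (if p.1.1 = q.2.1 ∧ p.2.1 = q.1.1 then 1 else 0))
          else 0).mulVec (fun p : (n × a) × (n × b) => ψ1 p.1 * ψ2 p.2)) = 1 ↔
      ∃ (φ : n → ℂ) (φ1 : a → ℂ) (φ2 : b → ℂ),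
        (∀ x α, ψ1 (x, α) = φ x * φ1 α) ∧ (∀ y β, ψ2 (y, β) = φ y * φ2 β) :=
  quantum_equality_corollary_general ψ1 ψ2 hψ1 hψ2
end

section
/- Let K be a finite type and let S : Matrix (K × K) (K × K) ℂ be the swap operator, S (x,y) (x',y') = if x = y' ∧ y = x' then 1 else 0. Then the swap-invariant subspace {v : (K × K) → ℂ | S.mulVec v = v} equals the ℂ-linear span of the set of vectors of the form (x,y) ↦ φ x * φ y for φ : K → ℂ. -/
open Matrix

noncomputable section

lemma swap_mulVec_eq {K : Type*} [Fintype K] [DecidableEq K] (v : K × K → ℂ) (p : K × K) :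
    ((Matrix.of fun p q : K × K =>
        if p.1 = q.2 ∧ p.2 = q.1 then (1 : ℂ) else 0).mulVec v) p = v (p.2, p.1) := by
  simp only [mulVec, dotProduct, of_apply, ite_mul, one_mul, zero_mul]
  rw [Finset.sum_eq_single (p.2, p.1)]
  · simp
  · rintro ⟨a, b⟩ _ hq
    rw [if_neg]
    rintro ⟨h1, h2⟩
    exact hq (by simp [h1, h2])
  · simp

lemma pair_mem_span {K : Type*} [Fintype K] [DecidableEq K] (x y : K) :
    (fun q : K × K => (Pi.single x 1 : K → ℂ) q.1 * (Pi.single y 1 : K → ℂ) q.2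
        + (Pi.single y 1 : K → ℂ) q.1 * (Pi.single x 1 : K → ℂ) q.2) ∈
      Submodule.span ℂ {v : K × K → ℂ | ∃ φ : K → ℂ, v = fun p => φ p.1 * φ p.2} := by
  have h1 : (fun q : K × K => ((Pi.single x 1 : K → ℂ) + (Pi.single y 1 : K → ℂ)) q.1
      * ((Pi.single x 1 : K → ℂ) + (Pi.single y 1 : K → ℂ)) q.2) ∈
      Submodule.span ℂ {v : K × K → ℂ | ∃ φ : K → ℂ, v = fun p => φ p.1 * φ p.2} :=
    Submodule.subset_span ⟨_, rfl⟩
  have h2 : (fun q : K × K => (Pi.single x 1 : K → ℂ) q.1 * (Pi.single x 1 : K → ℂ) q.2) ∈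
      Submodule.span ℂ {v : K × K → ℂ | ∃ φ : K → ℂ, v = fun p => φ p.1 * φ p.2} :=
    Submodule.subset_span ⟨_, rfl⟩
  have h3 : (fun q : K × K => (Pi.single y 1 : K → ℂ) q.1 * (Pi.single y 1 : K → ℂ) q.2) ∈
      Submodule.span ℂ {v : K × K → ℂ | ∃ φ : K → ℂ, v = fun p => φ p.1 * φ p.2} :=
    Submodule.subset_span ⟨_, rfl⟩
  have := Submodule.sub_mem _ (Submodule.sub_mem _ h1 h2) h3
  convert this using 1
  funext q
  simp only [Pi.sub_apply, Pi.add_apply]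
  ring

/-- The swap-invariant subspace of `ℂ^(K × K)` is spanned by the Kronecker
squares `φ ⊗ φ`. -/
theorem swap_invariant_eq_span {K : Type*} [Fintype K] [DecidableEq K] :
    {v : K × K → ℂ |
        (Matrix.of fun p q : K × K =>
          if p.1 = q.2 ∧ p.2 = q.1 then (1 : ℂ) else 0).mulVec v = v} =
      ↑(Submodule.span ℂ
        {v : K × K → ℂ | ∃ φ : K → ℂ, v = fun p => φ p.1 * φ p.2}) := by
  ext v
  simp only [Set.mem_setOf_eq, SetLike.mem_coe]
  constructor
  · intro hv
    have hsym : ∀ p : K × K, v (p.2, p.1) = v p := by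
      intro p
      conv_rhs => rw [← hv]
      rw [swap_mulVec_eq]
    have hrep : v = ∑ p : K × K, (v p / 2) •
        (fun q : K × K => (Pi.single p.1 1 : K → ℂ) q.1 * (Pi.single p.2 1 : K → ℂ) q.2
          + (Pi.single p.2 1 : K → ℂ) q.1 * (Pi.single p.1 1 : K → ℂ) q.2) := by
      funext q
      simp only [Finset.sum_apply, Pi.smul_apply, smul_eq_mul, mul_add]
      rw [Finset.sum_add_distrib]
      have e1 : ∑ p : K × K, v p / 2 * ((Pi.single p.1 1 : K → ℂ) q.1 * (Pi.single p.2 1 : K → ℂ) q.2)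
          = v q / 2 := by
        rw [Finset.sum_eq_single q]
        · simp
        · rintro ⟨a, b⟩ _ hb
          rcases eq_or_ne a q.1 with h | h
          · rcases eq_or_ne b q.2 with h' | h'
            · exact absurd (by simp [h, h']) hb
            · simp [Pi.single_apply, h']
          · simp [Pi.single_apply, h]
        · simp
      have e2 : ∑ p : K × K, v p / 2 * ((Pi.single p.2 1 : K → ℂ) q.1 * (Pi.single p.1 1 : K → ℂ) q.2)
          = v q / 2 := by
        rw [Finset.sum_eq_single (q.2, q.1)]
        · simp [hsym]
        · rintro ⟨a, b⟩ _ hb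
          rcases eq_or_ne b q.1 with h | h
          · rcases eq_or_ne a q.2 with h' | h'
            · exact absurd (by simp [h, h']) hb
            · simp [Pi.single_apply, h']
          · simp [Pi.single_apply, h]
        · simp
      rw [e1, e2]
      ring
    rw [hrep]
    exact Submodule.sum_mem _ fun p _ => Submodule.smul_mem _ _ (pair_mem_span p.1 p.2)
  · intro hv
    induction hv using Submodule.span_induction with
    | mem w hw =>
      obtain ⟨φ, rfl⟩ := hw
      funext p
      rw [swap_mulVec_eq]
      exact mul_comm _ _
    | zero => funext p; rw [swap_mulVec_eq]; rfl
    | add w u _ _ hw hu =>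
      funext p
      rw [swap_mulVec_eq]
      have hw' := congrFun hw p
      have hu' := congrFun hu p
      rw [swap_mulVec_eq] at hw' hu'
      simp [hw', hu']
    | smul c w _ hw =>
      funext p
      rw [swap_mulVec_eq]
      have hw' := congrFun hw p
      rw [swap_mulVec_eq] at hw'
      simp [hw']
end
end

section
/- The sequence n ↦ (Real.cos (π / (2 * n)))^(2 * n) tends to 1 as n → ∞ (along the natural numbers): Filter.Tendsto (fun n : ℕ => (Real.cos (Real.pi / (2 * n)))^(2 * n)) Filter.atTop (nhds 1). -/
open Filter Real

/-- The Zeno success weight `(cos(π/(2n)))^(2n)` tends to `1` as `n → ∞`. -/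
theorem zeno_weight_tendsto_one :
    Filter.Tendsto (fun n : ℕ => (Real.cos (Real.pi / (2 * n))) ^ (2 * n))
      Filter.atTop (nhds 1) := by
  have hlo : Tendsto (fun n : ℕ => 1 - Real.pi ^ 2 / (4 * n)) atTop (nhds 1) := by
    have : Tendsto (fun n : ℕ => Real.pi ^ 2 / (4 * n)) atTop (nhds 0) := by
      apply Tendsto.div_atTop tendsto_const_nhds
      exact Filter.Tendsto.const_mul_atTop (by norm_num) tendsto_natCast_atTop_atTop
    simpa using tendsto_const_nhds.sub this
  refine tendsto_of_tendsto_of_tendsto_of_le_of_le' hlo tendsto_const_nhds ?_ ?_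
  · filter_upwards [eventually_ge_atTop 2] with n hn
    have hn0 : (2:ℝ) ≤ n := by exact_mod_cast hn
    set x : ℝ := Real.pi / (2 * n) with hx
    have hx0 : 0 ≤ x := by positivity
    have hb : 1 - x ^ 2 / 2 ≤ Real.cos x := Real.one_sub_sq_div_two_le_cos
    have h1 : -2 ≤ -(x ^ 2 / 2) := by
      have hxle : x ≤ 1 := by
        rw [hx, div_le_one (by nlinarith)]
        nlinarith [Real.pi_le_four]
      nlinarith
    have hbern : 1 + (2 * n : ℕ) * (-(x ^ 2 / 2)) ≤ (1 + -(x ^ 2 / 2)) ^ (2 * n) :=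
      one_add_mul_le_pow h1 (2 * n)
    have hpow : (1 - x ^ 2 / 2) ^ (2 * n) ≤ Real.cos x ^ (2 * n) := by
      have hxle : x ≤ 1 := by
        rw [hx, div_le_one (by nlinarith)]
        nlinarith [Real.pi_le_four]
      exact pow_le_pow_left₀ (by nlinarith) hb _
    have key : 1 - (2 * n : ℕ) * (x ^ 2 / 2) ≤ Real.cos x ^ (2 * n) := by
      calc 1 - (2 * n : ℕ) * (x ^ 2 / 2) = 1 + (2 * n : ℕ) * (-(x ^ 2 / 2)) := by ring
        _ ≤ (1 + -(x ^ 2 / 2)) ^ (2 * n) := hbern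
        _ = (1 - x ^ 2 / 2) ^ (2 * n) := by ring_nf
        _ ≤ _ := hpow
    have hxval : (2 * n : ℕ) * (x ^ 2 / 2) = Real.pi ^ 2 / (4 * n) := by
      rw [hx]
      push_cast
      field_simp
      ring
    linarith [key, hxval.le, hxval.ge]
  · refine Filter.Eventually.of_forall fun n => ?_
    calc Real.cos (Real.pi / (2 * n)) ^ (2 * n) ≤ |Real.cos (Real.pi / (2 * n))| ^ (2 * n) := by
          rw [← abs_pow]; exact le_abs_self _
      _ ≤ 1 ^ (2 * n) := pow_le_pow_left₀ (abs_nonneg _) (Real.abs_cos_le_one _) _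
      _ = 1 := one_pow _
end

section
/- Fix n ≥ 1 and set θ := π / (2 * n). Let R : Matrix (Fin 2) (Fin 2) ℝ be the rotation matrix !![cos θ, -sin θ; sin θ, cos θ], let e₀ := ![1, 0], and let φ_i := (R^i).mulVec e₀ for 0 ≤ i ≤ n. Then the product of projectors satisfies ((vecMulVec φ_n φ_n) * (vecMulVec φ_{n-1} φ_{n-1}) * ⋯ * (vecMulVec φ_1 φ_1)).mulVec e₀ = (cos θ)^n • φ_n, where vecMulVec φ φ is the rank-one projector onto the unit vector φ and the product is taken with index decreasing from n to 1. -/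
/-!
`φ i = (cos iθ, sin iθ)`, so consecutive vectors have inner product `cos θ`. Hence the
projector onto `φ (i+1)` sends `φ i` to `cos θ • φ (i+1)`, and applying the projectors in
increasing order to `φ 0 = e₀` telescopes to `(cos θ)^n • φ n`.
-/

open Matrix

noncomputable section

def rotationMatrix (θ : ℝ) : Matrix (Fin 2) (Fin 2) ℝ :=
  !![Real.cos θ, -Real.sin θ; Real.sin θ, Real.cos θ]

theorem rotationMatrix_zero : rotationMatrix 0 = 1 := by
  ext i j
  fin_cases i <;> fin_cases j <;> simp [rotationMatrix]

theorem rotationMatrix_add (a b : ℝ) :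
    rotationMatrix (a + b) = rotationMatrix a * rotationMatrix b := by
  ext i j
  fin_cases i <;> fin_cases j <;>
    simp [rotationMatrix, Real.cos_add, Real.sin_add] <;> ring

theorem rotationMatrix_pow (θ : ℝ) (n : ℕ) : rotationMatrix θ ^ n = rotationMatrix (n * θ) := by
  induction n with
  | zero => simp [rotationMatrix_zero]
  | succ n ih => rw [pow_succ, ih, ← rotationMatrix_add]; push_cast; ring_nf

theorem rotationMatrix_mulVec_e₀ (θ : ℝ) :
    rotationMatrix θ *ᵥ ![1, 0] = ![Real.cos θ, Real.sin θ] := by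
  ext i
  fin_cases i <;> simp [rotationMatrix]

theorem dotProduct_cos_sin (a b : ℝ) :
    ![Real.cos a, Real.sin a] ⬝ᵥ ![Real.cos b, Real.sin b] = Real.cos (a - b) := by
  simp [dotProduct, Fin.sum_univ_two, Real.cos_sub]

theorem List.prod_range_succ_map_sub {M : Type*} [Monoid M] (f : ℕ → M) (n : ℕ) :
    ((List.range (n + 1)).map fun k => f (n + 1 - k)).prod
      = f (n + 1) * ((List.range n).map fun k => f (n - k)).prod := by
  simp [List.range_succ_eq_map, Function.comp_def]

theorem vecMulVec_chain_mulVec {ι R : Type*} [Fintype ι] [DecidableEq ι] [CommSemiring R] (ψ : ℕ → ι → R)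
    (c : R) (hψ : ∀ i, ψ (i + 1) ⬝ᵥ ψ i = c) (n : ℕ) :
    ((List.range n).map fun k => vecMulVec (ψ (n - k)) (ψ (n - k))).prod *ᵥ ψ 0
      = c ^ n • ψ n := by
  induction n with
  | zero => simp
  | succ n ih =>
    rw [List.prod_range_succ_map_sub (fun i => vecMulVec (ψ i) (ψ i)), ← mulVec_mulVec, ih, mulVec_smul, vecMulVec_mulVec,
      op_smul_eq_smul, hψ, smul_smul, pow_succ]

theorem zeno_projector_product_general (n : ℕ) :
    let θ : ℝ := Real.pi / (2 * n)
    let R : Matrix (Fin 2) (Fin 2) ℝ :=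
      !![Real.cos θ, -Real.sin θ; Real.sin θ, Real.cos θ]
    let e₀ : Fin 2 → ℝ := ![1, 0]
    let φ : ℕ → Fin 2 → ℝ := fun i => (R ^ i).mulVec e₀
    (((List.range n).map fun k =>
        Matrix.vecMulVec (φ (n - k)) (φ (n - k))).prod).mulVec e₀
      = (Real.cos θ) ^ n • φ n := by
  intro θ R e₀ φ
  have hφ (i : ℕ) : φ i = ![Real.cos (i * θ), Real.sin (i * θ)] := by
    rw [← rotationMatrix_mulVec_e₀, ← rotationMatrix_pow]
    rfl
  have hconsecutive (i : ℕ) : φ (i + 1) ⬝ᵥ φ i = Real.cos θ := by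
    rw [hφ, hφ, dotProduct_cos_sin]
    push_cast
    ring_nf
  have hφ₀ : φ 0 = e₀ := one_mulVec e₀
  rw [← hφ₀]
  exact vecMulVec_chain_mulVec φ (Real.cos θ) hconsecutive n

/-- Discrete quantum Zeno identity: applying the projectors onto
`φ_n, φ_{n-1}, …, φ_1` (in decreasing order) to `e₀` yields `(cos θ)^n • φ_n`. -/
theorem zeno_projector_product (n : ℕ) (hn : 1 ≤ n) :
    let θ : ℝ := Real.pi / (2 * n)
    let R : Matrix (Fin 2) (Fin 2) ℝ :=
      !![Real.cos θ, -Real.sin θ; Real.sin θ, Real.cos θ]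
    let e₀ : Fin 2 → ℝ := ![1, 0]
    let φ : ℕ → Fin 2 → ℝ := fun i => (R ^ i).mulVec e₀
    (((List.range n).map fun k =>
        Matrix.vecMulVec (φ (n - k)) (φ (n - k))).prod).mulVec e₀
      = (Real.cos θ) ^ n • φ n :=
  zeno_projector_product_general n
end
end
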